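/- arXiv:2111.06708 — 3 statements merged into one kernel-verified Lean document; each statement's English description precedes it below -/
import Mathlib

section
/- Let 0 < α < 1 and a_i = (i+1)^{1-α} - i^{1-α}. Define p_0 = 1 and p_n = Σ_{j=1}^n (a_{j-1} - a_j) p_{n-j} for n ≥ 1. Then 0 < p_n < 1 for all n ≥ 1. -/
noncomputable def L1a (α : ℝ) (i : ℕ) : ℝ :=
  ((i : ℝ) + 1) ^ (1 - α) - (i : ℝ) ^ (1 - α)

noncomputable def L1p (α : ℝ) : ℕ → ℝ
  | 0 => 1
  | n + 1 =>
      ∑ j ∈ (Finset.range (n + 1)).attach,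
        (L1a α (n - j.1) - L1a α (n + 1 - j.1)) * L1p α j.1
termination_by n => n
decreasing_by exact Finset.mem_range.mp j.2

lemma L1a_pos {α : ℝ} (hα1 : α < 1) (i : ℕ) : 0 < L1a α i := by
  have h : (i:ℝ) ^ (1-α) < ((i:ℝ)+1) ^ (1-α) :=
    Real.rpow_lt_rpow (Nat.cast_nonneg i) (by linarith) (by linarith)
  unfold L1a; linarith

lemma L1a_anti {α : ℝ} (hα : 0 < α) (hα1 : α < 1) (i : ℕ) :
    L1a α (i+1) < L1a α i := by
  have hcc := Real.strictConcaveOn_rpow (p := 1-α) (by linarith) (by linarith)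
  have hne : ((i:ℝ)) ≠ (i:ℝ)+2 := by linarith
  have h := hcc.2 (Set.mem_Ici.mpr (Nat.cast_nonneg i))
      (Set.mem_Ici.mpr (by positivity : (0:ℝ) ≤ (i:ℝ)+2)) hne
      (by norm_num : (0:ℝ) < 1/2) (by norm_num : (0:ℝ) < 1/2) (by norm_num)
  have hmid : (1/2 : ℝ) • (i:ℝ) + (1/2 : ℝ) • ((i:ℝ)+2) = (i:ℝ)+1 := by
    simp [smul_eq_mul]; ring
  rw [hmid] at h
  simp only [smul_eq_mul] at h
  unfold L1a
  push_cast
  have he : ((i:ℝ)+1+1) = (i:ℝ)+2 := by ring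
  rw [he]
  linarith

lemma L1p_succ (α : ℝ) (n : ℕ) :
    L1p α (n+1) = ∑ j ∈ Finset.range (n+1),
      (L1a α (n - j) - L1a α (n + 1 - j)) * L1p α j := by
  rw [show L1p α (n+1) = ∑ j ∈ (Finset.range (n + 1)).attach,
        (L1a α (n - j.1) - L1a α (n + 1 - j.1)) * L1p α j.1 from by rw [L1p]]
  exact Finset.sum_attach _ fun j => (L1a α (n - j) - L1a α (n + 1 - j)) * L1p α j

lemma coeff_sum (α : ℝ) (hα1 : α < 1) (n : ℕ) :
    ∑ j ∈ Finset.range (n+1), (L1a α (n - j) - L1a α (n + 1 - j))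
      = 1 - L1a α (n+1) := by
  have h1 : ∀ j ∈ Finset.range (n+1), (L1a α (n - j) - L1a α (n + 1 - j))
      = (fun k => L1a α k - L1a α (k+1)) (n - j) := by
    intro j hj
    have hj' : j ≤ n := Nat.lt_succ_iff.mp (Finset.mem_range.mp hj)
    simp [Nat.succ_sub hj']
  rw [Finset.sum_congr rfl h1]
  have hrefl := Finset.sum_range_reflect (fun k => L1a α k - L1a α (k+1)) (n+1)
  simp only [Nat.add_sub_cancel] at hrefl
  rw [hrefl, Finset.sum_range_sub' (fun k => L1a α k)]
  have h0 : L1a α 0 = 1 := by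
    simp [L1a, Real.zero_rpow (by linarith : 1-α ≠ 0)]
  rw [h0]

lemma L1p_pos_le_one (α : ℝ) (hα : 0 < α) (hα1 : α < 1) (n : ℕ) :
    0 < L1p α n ∧ L1p α n ≤ 1 := by
  induction n using Nat.strong_induction_on with
  | _ n ih =>
    match n with
    | 0 => simp [L1p]
    | m + 1 =>
      rw [L1p_succ]
      have hc : ∀ j ∈ Finset.range (m+1),
          0 < L1a α (m - j) - L1a α (m + 1 - j) := by
        intro j hj
        have hj' : j ≤ m := Nat.lt_succ_iff.mp (Finset.mem_range.mp hj)
        have : m + 1 - j = (m - j) + 1 := by omega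
        rw [this]
        linarith [L1a_anti hα hα1 (m - j)]
      constructor
      · apply Finset.sum_pos
        · intro j hj
          exact mul_pos (hc j hj)
            (ih j (Nat.lt_succ_of_le (Nat.lt_succ_iff.mp (Finset.mem_range.mp hj)))).1
        · exact ⟨0, Finset.mem_range.mpr (Nat.succ_pos m)⟩
      · calc ∑ j ∈ Finset.range (m+1), (L1a α (m - j) - L1a α (m + 1 - j)) * L1p α j
            ≤ ∑ j ∈ Finset.range (m+1), (L1a α (m - j) - L1a α (m + 1 - j)) := by
              apply Finset.sum_le_sum
              intro j hj
              have hp := ih j (Nat.lt_succ_of_le (Nat.lt_succ_iff.mp (Finset.mem_range.mp hj)))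
              nlinarith [hc j hj, hp.1, hp.2]
        _ = 1 - L1a α (m+1) := coeff_sum α hα1 m
        _ ≤ 1 := by linarith [L1a_pos hα1 (m+1)]

/-- 0 < p_n < 1 for all n ≥ 1. -/
theorem L1p_pos_lt_one (α : ℝ) (hα : 0 < α) (hα1 : α < 1) (n : ℕ) (hn : 1 ≤ n) :
    0 < L1p α n ∧ L1p α n < 1 := by
  obtain ⟨m, rfl⟩ := Nat.exists_eq_add_of_le hn
  refine ⟨(L1p_pos_le_one α hα hα1 (1+m)).1, ?_⟩
  have h1m : 1 + m = m + 1 := by omega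
  rw [h1m, L1p_succ]
  have hc : ∀ j ∈ Finset.range (m+1),
      0 < L1a α (m - j) - L1a α (m + 1 - j) := by
    intro j hj
    have hj' : j ≤ m := Nat.lt_succ_iff.mp (Finset.mem_range.mp hj)
    have : m + 1 - j = (m - j) + 1 := by omega
    rw [this]
    linarith [L1a_anti hα hα1 (m - j)]
  calc ∑ j ∈ Finset.range (m+1), (L1a α (m - j) - L1a α (m + 1 - j)) * L1p α j
      ≤ ∑ j ∈ Finset.range (m+1), (L1a α (m - j) - L1a α (m + 1 - j)) := by
        apply Finset.sum_le_sum
        intro j hj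
        have hp := L1p_pos_le_one α hα hα1 j
        nlinarith [hc j hj, hp.1, hp.2]
    _ = 1 - L1a α (m+1) := coeff_sum α hα1 m
    _ < 1 := by linarith [L1a_pos hα1 (m+1)]
end

section
/- Let 0 < α < 1, a_i = (i+1)^{1-α} - i^{1-α}, and (p_n) defined by p_0 = 1, p_n = Σ_{j=1}^n (a_{j-1} - a_j) p_{n-j} for n ≥ 1. Then for all integers 1 ≤ m ≤ n, the identity Σ_{j=m}^{n} p_{n-j} a_{j-m} = 1 holds. -/
/-- Discrete orthogonality identity: Σ_{j=m}^{n} p_{n-j} a_{j-m} = 1 for 1 ≤ m ≤ n. -/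
theorem L1p_orthogonality (α : ℝ) (hα : 0 < α) (hα1 : α < 1)
    (m n : ℕ) (hm : 1 ≤ m) (hmn : m ≤ n) :
    ∑ j ∈ Finset.Icc m n, L1p α (n - j) * L1a α (j - m) = 1 := by
  have ha0 : L1a α 0 = 1 := by
    simp [L1a, Real.zero_rpow (by linarith : (1 : ℝ) - α ≠ 0)]
  have hsucc : ∀ k : ℕ, L1p α (k + 1) =
      ∑ j ∈ Finset.range (k + 1), (L1a α (k - j) - L1a α (k + 1 - j)) * L1p α j := by
    intro k
    rw [L1p]
    exact Finset.sum_attach _ fun j => (L1a α (k - j) - L1a α (k + 1 - j)) * L1p α j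
  have key : ∀ N : ℕ, ∑ k ∈ Finset.range (N + 1), L1p α k * L1a α (N - k) = 1 := by
    intro N
    induction N with
    | zero => simp [L1p, ha0]
    | succ N ih =>
      rw [Finset.sum_range_succ]
      have h1 : (N + 1) - (N + 1) = 0 := by omega
      rw [h1, ha0, hsucc]
      have h2 : ∑ k ∈ Finset.range (N + 1), L1p α k * L1a α (N + 1 - k)
          + (∑ j ∈ Finset.range (N + 1), (L1a α (N - j) - L1a α (N + 1 - j)) * L1p α j) * 1
          = ∑ k ∈ Finset.range (N + 1), L1p α k * L1a α (N - k) := by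
        rw [mul_one, ← Finset.sum_add_distrib]
        exact Finset.sum_congr rfl (fun k _ => by ring)
      rw [h2, ih]
  have hre : ∑ j ∈ Finset.Icc m n, L1p α (n - j) * L1a α (j - m)
      = ∑ k ∈ Finset.range (n - m + 1), L1p α (n - m - k) * L1a α k := by
    rw [show n - m + 1 = n + 1 - m by omega, ← Finset.Ico_add_one_right_eq_Icc, Finset.sum_Ico_eq_sum_range]
    refine Finset.sum_congr rfl (fun k hk => ?_)
    rw [Finset.mem_range] at hk
    congr 1 <;> congr 1 <;> omega
  rw [hre, ← key (n - m)]
  rw [← Finset.sum_range_reflect]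
  refine Finset.sum_congr rfl (fun k hk => ?_)
  rw [Finset.mem_range] at hk
  congr 2 <;> omega
end

section
/- Kernel convolution identity in a Hilbert space: Let H be a real Hilbert space, T > 0, k̃ ∈ W^{1,1}(0,T) nonnegative and nonincreasing, and v ∈ L²(0,T;H) (extended by v(t) for the formula below). Then for a.e. t ∈ (0,T): ⟨d/dt (k̃ ∗ v)(t), v(t)⟩ = ½ d/dt (k̃ ∗ ‖v‖²)(t) + ½ k̃(t)‖v(t)‖² + ½ ∫₀ᵗ (-k̃'(s)) ‖v(t) - v(t-s)‖² ds. -/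
/-!
Write `k̃ x = k₀ + ∫₀ˣ k̃'`. Fubini on the triangle `0 < s < u ≤ τ` turns `k̃ ∗ w` into
`k₀ ∫₀^τ w + ∫₀^τ (k̃' ∗ w)`, so by the Lebesgue differentiation theorem
`(k̃ ∗ w)' = k₀ w + k̃' ∗ w` almost everywhere, for `w = v` and for `w = ‖v‖²` alike.
Pairing the first with `v t` and expanding `‖v t - v (t - s)‖²` under the integral in the
last term gives the identity.
-/

open MeasureTheory Set
open scoped RealInnerProductSpace

theorem Ioc_inter_Iio_of_le {α : Type*} [LinearOrder α] {a b c : α} (h : c ≤ b) :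
    Ioc a b ∩ Iio c = Ioo a c := by
  ext x
  exact ⟨fun hx => ⟨hx.1.1, hx.2⟩, fun hx => ⟨⟨hx.1, hx.2.le.trans h⟩, hx.2⟩⟩

section CausalConvolution

variable {E : Type*} [NormedAddCommGroup E] [NormedSpace ℝ E]
  {g : ℝ → ℝ} {w : ℝ → E} {τ : ℝ}

noncomputable def triangleIntegrand (g : ℝ → ℝ) (w : ℝ → E) : ℝ × ℝ → E :=
  {p | p.2 < p.1}.indicator fun p => g (p.1 - p.2) • w p.2

theorem setIntegral_triangleIntegrand_eq_causalConv {u : ℝ} (hu : u ∈ Icc 0 τ) :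
    ∫ s in Ioc 0 τ, triangleIntegrand g w (u, s) = ∫ s in 0..u, g (u - s) • w s := by
  change ∫ s in Ioc 0 τ, (Iio u).indicator (fun s => g (u - s) • w s) s = _
  rw [setIntegral_indicator measurableSet_Iio, Ioc_inter_Iio_of_le (a := 0) hu.2,
    intervalIntegral.integral_of_le hu.1, integral_Ioc_eq_integral_Ioo]

theorem intervalIntegrable_of_integrableOn_triangleIntegrand {u : ℝ} (hu : u ∈ Icc 0 τ)
    (h : IntegrableOn (fun s => triangleIntegrand g w (u, s)) (Ioc 0 τ)) :
    IntervalIntegrable (fun s => g (u - s) • w s) volume 0 u := by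
  change Integrable ((Iio u).indicator (fun s => g (u - s) • w s)) _ at h
  rw [integrable_indicator_iff measurableSet_Iio, IntegrableOn,
    Measure.restrict_restrict measurableSet_Iio, inter_comm,
    Ioc_inter_Iio_of_le (a := 0) hu.2] at h
  exact (intervalIntegrable_iff_integrableOn_Ioo_of_le hu.1).2 h

theorem integrable_triangleIntegrand (hg : IntegrableOn g (Ioc 0 τ))
    (hw : IntegrableOn w (Ioc 0 τ)) :
    Integrable (triangleIntegrand g w)
      ((volume.restrict (Ioc 0 τ)).prod (volume.restrict (Ioc 0 τ))) := by
  set I := Ioc (0 : ℝ) τ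
  have hprod : Integrable (fun p : ℝ × ℝ => I.indicator g (p.1 - p.2) • I.indicator w p.2)
      (volume.prod volume) :=
    ((integrable_indicator_iff measurableSet_Ioc).2 hw).convolution_integrand
      (ContinuousLinearMap.lsmul ℝ ℝ).flip ((integrable_indicator_iff measurableSet_Ioc).2 hg)
  rw [Measure.prod_restrict]
  refine (hprod.integrableOn.indicator (measurableSet_lt measurable_snd measurable_fst)).congr ?_
  filter_upwards [ae_restrict_mem (measurableSet_Ioc.prod measurableSet_Ioc)] with p ⟨hu, hs⟩
  by_cases hsu : p.2 < p.1
  · have hus : p.1 - p.2 ∈ I := ⟨by linarith, by linarith [hu.2, hs.1]⟩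
    simp [triangleIntegrand, hsu, hus, hs]
  · simp [triangleIntegrand, hsu]

theorem intervalIntegrable_causalConv (hτ : 0 ≤ τ) (hg : IntegrableOn g (Ioc 0 τ))
    (hw : IntegrableOn w (Ioc 0 τ)) :
    IntervalIntegrable (fun u => ∫ s in 0..u, g (u - s) • w s) volume 0 τ := by
  rw [intervalIntegrable_iff_integrableOn_Ioc_of_le hτ]
  refine (integrable_triangleIntegrand hg hw).integral_prod_left.congr ?_
  filter_upwards [ae_restrict_mem measurableSet_Ioc] with u hu
  exact setIntegral_triangleIntegrand_eq_causalConv (Ioc_subset_Icc_self hu)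

theorem ae_intervalIntegrable_comp_sub_smul (hg : IntegrableOn g (Ioc 0 τ))
    (hw : IntegrableOn w (Ioc 0 τ)) :
    ∀ᵐ u, u ∈ Ioc 0 τ → IntervalIntegrable (fun s => g (u - s) • w s) volume 0 u := by
  rw [← ae_restrict_iff' measurableSet_Ioc]
  filter_upwards [(integrable_triangleIntegrand hg hw).prod_right_ae,
    ae_restrict_mem measurableSet_Ioc] with u hu hmem
  exact intervalIntegrable_of_integrableOn_triangleIntegrand (Ioc_subset_Icc_self hmem) hu

variable [CompleteSpace E]

theorem setIntegral_triangleIntegrand_eq_primitive_smul {s : ℝ} (hs : s ∈ Icc 0 τ) :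
    ∫ u in Ioc 0 τ, triangleIntegrand g w (u, s) = (∫ r in 0..τ - s, g r) • w s := by
  change ∫ u in Ioc 0 τ, (Ioi s).indicator (fun u => g (u - s) • w s) u = _
  rw [setIntegral_indicator measurableSet_Ioi, Ioc_inter_Ioi, max_eq_right hs.1,
    ← intervalIntegral.integral_of_le hs.2, intervalIntegral.integral_smul_const,
    intervalIntegral.integral_comp_sub_right, sub_self]

theorem intervalIntegrable_primitive_comp_sub_smul (hτ : 0 ≤ τ) (hg : IntegrableOn g (Ioc 0 τ))
    (hw : IntegrableOn w (Ioc 0 τ)) :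
    IntervalIntegrable (fun s => (∫ r in 0..τ - s, g r) • w s) volume 0 τ := by
  rw [intervalIntegrable_iff_integrableOn_Ioc_of_le hτ]
  refine (integrable_triangleIntegrand hg hw).integral_prod_right.congr ?_
  filter_upwards [ae_restrict_mem measurableSet_Ioc] with s hs
  exact setIntegral_triangleIntegrand_eq_primitive_smul (Ioc_subset_Icc_self hs)

theorem integral_primitive_comp_sub_smul_eq_integral_causalConv (hτ : 0 ≤ τ)
    (hg : IntegrableOn g (Ioc 0 τ)) (hw : IntegrableOn w (Ioc 0 τ)) :
    ∫ s in 0..τ, (∫ r in 0..τ - s, g r) • w s = ∫ u in 0..τ, ∫ s in 0..u, g (u - s) • w s := by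
  rw [intervalIntegral.integral_of_le hτ, intervalIntegral.integral_of_le hτ]
  calc ∫ s in Ioc 0 τ, (∫ r in 0..τ - s, g r) • w s
      = ∫ s in Ioc 0 τ, ∫ u in Ioc 0 τ, triangleIntegrand g w (u, s) :=
        setIntegral_congr_fun measurableSet_Ioc fun s hs =>
          (setIntegral_triangleIntegrand_eq_primitive_smul (Ioc_subset_Icc_self hs)).symm
    _ = ∫ u in Ioc 0 τ, ∫ s in Ioc 0 τ, triangleIntegrand g w (u, s) :=
        (integral_integral_swap (f := fun u s => triangleIntegrand g w (u, s))
          (integrable_triangleIntegrand hg hw)).symm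
    _ = ∫ u in Ioc 0 τ, ∫ s in 0..u, g (u - s) • w s :=
        setIntegral_congr_fun measurableSet_Ioc fun u hu =>
          setIntegral_triangleIntegrand_eq_causalConv (Ioc_subset_Icc_self hu)

theorem exists_eq_add_integral_of_hasDerivAt {f f' : ℝ → E} {a b : ℝ}
    (hderiv : ∀ x ∈ Ioo a b, HasDerivAt f (f' x) x) (hf' : IntegrableOn f' (Ioo a b)) :
    ∃ c, ∀ x ∈ Ioo a b, f x = c + ∫ y in a..x, f' y := by
  rcases (Ioo a b).eq_empty_or_nonempty with h | ⟨x₀, hx₀⟩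
  · exact ⟨0, by simp [h]⟩
  have hint : ∀ x ∈ Ioo a b, IntervalIntegrable f' volume a x := fun x hx =>
    (intervalIntegrable_iff_integrableOn_Ioc_of_le hx.1.le).2
      (hf'.mono_set fun y hy => ⟨hy.1, hy.2.trans_lt hx.2⟩)
  refine ⟨f x₀ - ∫ y in a..x₀, f' y, fun x hx => ?_⟩
  have hftc := intervalIntegral.integral_eq_sub_of_hasDerivAt
    (fun y hy => hderiv y (ordConnected_Ioo.uIcc_subset hx₀ hx hy))
    ((hint x₀ hx₀).symm.trans (hint x hx))
  rw [← intervalIntegral.integral_interval_sub_left (hint x hx) (hint x₀ hx₀)] at hftc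
  rw [eq_add_of_sub_eq' hftc.symm]
  abel

theorem causalConv_eq_smul_integral_add_integral {k : ℝ → ℝ} {k₀ : ℝ} (hτ : 0 ≤ τ)
    (hg : IntegrableOn g (Ioc 0 τ)) (hw : IntegrableOn w (Ioc 0 τ))
    (hk : ∀ x ∈ Ioo 0 τ, k x = k₀ + ∫ r in 0..x, g r) :
    ∫ s in 0..τ, k (τ - s) • w s =
      k₀ • (∫ s in 0..τ, w s) + ∫ u in 0..τ, ∫ s in 0..u, g (u - s) • w s := by
  have hsplit : ∫ s in 0..τ, k (τ - s) • w s =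
      ∫ s in 0..τ, (k₀ • w s + (∫ r in 0..τ - s, g r) • w s) := by
    simp only [intervalIntegral.integral_of_le hτ, integral_Ioc_eq_integral_Ioo]
    refine setIntegral_congr_fun measurableSet_Ioo fun s hs => ?_
    rw [hk (τ - s) ⟨by linarith [hs.2], by linarith [hs.1]⟩, add_smul]
  have hw' : IntervalIntegrable (fun s => k₀ • w s) volume 0 τ :=
    ((intervalIntegrable_iff_integrableOn_Ioc_of_le hτ).2 hw).smul k₀
  rw [hsplit,
    intervalIntegral.integral_add hw' (intervalIntegrable_primitive_comp_sub_smul hτ hg hw),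
    intervalIntegral.integral_smul,
    integral_primitive_comp_sub_smul_eq_integral_causalConv hτ hg hw]

theorem ae_hasDerivAt_causalConv {T k₀ : ℝ} {k : ℝ → ℝ} (hg : IntegrableOn g (Ioc 0 T))
    (hw : IntegrableOn w (Ioc 0 T)) (hk : ∀ x ∈ Ioo 0 T, k x = k₀ + ∫ r in 0..x, g r) :
    ∀ᵐ t, t ∈ Ioo 0 T → HasDerivAt (fun τ => ∫ s in 0..τ, k (τ - s) • w s)
      (k₀ • w t + ∫ s in 0..t, g (t - s) • w s) t := by
  obtain hT | hT := lt_or_ge T 0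
  · exact ae_of_all _ fun t ht => absurd (ht.1.trans ht.2) hT.not_gt
  filter_upwards [((intervalIntegrable_iff_integrableOn_Ioc_of_le hT).2 hw).ae_hasDerivAt_integral,
    (intervalIntegrable_causalConv hT hg hw).ae_hasDerivAt_integral] with t hW hH ht
  have htT : t ∈ uIcc 0 T := by rw [uIcc_of_le hT]; exact Ioo_subset_Icc_self ht
  refine (((hW htT 0 left_mem_uIcc).const_smul k₀).add
    (hH htT 0 left_mem_uIcc)).congr_of_eventuallyEq ?_
  filter_upwards [isOpen_Ioo.mem_nhds ht] with τ hτ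
  simp only [Pi.add_apply, Pi.smul_apply]
  exact causalConv_eq_smul_integral_add_integral hτ.1.le
    (hg.mono_set (Ioc_subset_Ioc_right hτ.2.le)) (hw.mono_set (Ioc_subset_Ioc_right hτ.2.le))
    fun x hx => hk x ⟨hx.1, hx.2.trans hτ.2⟩

end CausalConvolution

theorem inner_causalConv_eq {H : Type*} [NormedAddCommGroup H] [InnerProductSpace ℝ H]
    [CompleteSpace H] {g : ℝ → ℝ} {w : ℝ → H} {t : ℝ} (k₀ : ℝ) (x : H)
    (hg : IntervalIntegrable g volume 0 t)
    (hgw : IntervalIntegrable (fun s => g (t - s) • w s) volume 0 t)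
    (hgw2 : IntervalIntegrable (fun s => g (t - s) * ‖w s‖ ^ 2) volume 0 t) :
    ⟪k₀ • x + ∫ s in 0..t, g (t - s) • w s, x⟫ =
      1 / 2 * (k₀ * ‖x‖ ^ 2 + ∫ s in 0..t, g (t - s) * ‖w s‖ ^ 2) +
        1 / 2 * (k₀ + ∫ s in 0..t, g s) * ‖x‖ ^ 2 +
          1 / 2 * ∫ s in 0..t, -g s * ‖x - w (t - s)‖ ^ 2 := by
  have hg' : IntervalIntegrable (fun s => g (t - s)) volume 0 t := by
    simpa using hg.symm.comp_sub_left t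
  have hflip : ∫ s in 0..t, -g s * ‖x - w (t - s)‖ ^ 2 =
      ∫ s in 0..t, (2 * ⟪x, g (t - s) • w s⟫ - g (t - s) * ‖x‖ ^ 2 - g (t - s) * ‖w s‖ ^ 2) := by
    have hsub := intervalIntegral.integral_comp_sub_left (a := 0) (b := t)
      (fun s => -g s * ‖x - w (t - s)‖ ^ 2) t
    simp only [sub_sub_cancel, sub_zero, sub_self] at hsub
    rw [← hsub]
    refine intervalIntegral.integral_congr fun s _ => ?_
    simp only [norm_sub_sq_real, real_inner_smul_right]
    ring
  have hinner_int : IntervalIntegrable (fun s => 2 * ⟪x, g (t - s) • w s⟫) volume 0 t :=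
    IntervalIntegrable.const_mul ⟨hgw.1.const_inner x, hgw.2.const_inner x⟩ 2
  have hinner : ∫ s in 0..t, ⟪x, g (t - s) • w s⟫ = ⟪x, ∫ s in 0..t, g (t - s) • w s⟫ :=
    (innerSL ℝ x).intervalIntegral_comp_comm hgw
  have hG : ∫ s in 0..t, g (t - s) = ∫ s in 0..t, g s := by
    simp [intervalIntegral.integral_comp_sub_left g t]
  have hnorm_int := hg'.mul_const (‖x‖ ^ 2)
  rw [hflip, intervalIntegral.integral_sub (hinner_int.sub hnorm_int) hgw2,
    intervalIntegral.integral_sub hinner_int hnorm_int,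
    intervalIntegral.integral_const_mul, intervalIntegral.integral_mul_const, hinner, hG,
    inner_add_left, real_inner_smul_left, real_inner_self_eq_norm_sq, real_inner_comm]
  ring

theorem kernel_convolution_identity_general
    {H : Type*} [NormedAddCommGroup H] [InnerProductSpace ℝ H] [CompleteSpace H]
    (T : ℝ) (ktil ktil' : ℝ → ℝ)
    (hderiv : ∀ s ∈ Set.Ioo (0:ℝ) T, HasDerivAt ktil (ktil' s) s)
    (hk'_int : IntegrableOn ktil' (Set.Ioo 0 T))
    (v : ℝ → H) (hv : MemLp v 2 (volume.restrict (Set.Ioo 0 T))) :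
    ∀ᵐ t ∂(volume.restrict (Set.Ioo (0:ℝ) T)),
      ∃ (D : H) (d : ℝ),
        HasDerivAt (fun τ : ℝ => ∫ s in (0:ℝ)..τ, ktil (τ - s) • v s) D t ∧
        HasDerivAt (fun τ : ℝ => ∫ s in (0:ℝ)..τ, ktil (τ - s) * ‖v s‖ ^ 2) d t ∧
        ⟪D, v t⟫ =
          (1 / 2) * d + (1 / 2) * ktil t * ‖v t‖ ^ 2 +
            (1 / 2) * ∫ s in (0:ℝ)..t, (-(ktil' s)) * ‖v t - v (t - s)‖ ^ 2 := by
  obtain ⟨k₀, hk⟩ := exists_eq_add_integral_of_hasDerivAt hderiv hk'_int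
  have hg : IntegrableOn ktil' (Ioc 0 T) := (integrableOn_Ioc_iff_integrableOn_Ioo).2 hk'_int
  have hv₁ : IntegrableOn v (Ioc 0 T) :=
    (integrableOn_Ioc_iff_integrableOn_Ioo).2 (hv.integrable one_le_two)
  have hv₂ : IntegrableOn (fun s => ‖v s‖ ^ 2) (Ioc 0 T) :=
    (integrableOn_Ioc_iff_integrableOn_Ioo).2 (hv.integrable_norm_pow two_ne_zero)
  rw [ae_restrict_iff' measurableSet_Ioo]
  filter_upwards [ae_hasDerivAt_causalConv hg hv₁ hk, ae_hasDerivAt_causalConv hg hv₂ hk,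
    ae_intervalIntegrable_comp_sub_smul hg hv₁,
    ae_intervalIntegrable_comp_sub_smul hg hv₂] with t hD hd hI₁ hI₂ ht
  refine ⟨_, _, hD ht, hd ht, ?_⟩
  have hgt : IntervalIntegrable ktil' volume 0 t :=
    (intervalIntegrable_iff_integrableOn_Ioc_of_le ht.1.le).2
      (hg.mono_set (Ioc_subset_Ioc_right ht.2.le))
  rw [inner_causalConv_eq k₀ (v t) hgt (hI₁ (Ioo_subset_Ioc_self ht))
    (hI₂ (Ioo_subset_Ioc_self ht)), hk t ht]
  simp only [smul_eq_mul]

/-- Kernel convolution identity in a Hilbert space (Gripenberg et al.):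
for a nonnegative nonincreasing W^{1,1} kernel k̃ and v ∈ L²(0,T;H), a.e. t:
⟨(k̃∗v)'(t), v(t)⟩ = ½ (k̃∗‖v‖²)'(t) + ½ k̃(t)‖v(t)‖²
  + ½ ∫₀ᵗ (-k̃'(s)) ‖v(t)-v(t-s)‖² ds. -/
theorem kernel_convolution_identity
    {H : Type*} [NormedAddCommGroup H] [InnerProductSpace ℝ H] [CompleteSpace H]
    (T : ℝ) (hT : 0 < T) (ktil ktil' : ℝ → ℝ)
    (hderiv : ∀ s ∈ Set.Ioo (0:ℝ) T, HasDerivAt ktil (ktil' s) s)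
    (hk_int : IntegrableOn ktil (Set.Ioo 0 T))
    (hk'_int : IntegrableOn ktil' (Set.Ioo 0 T))
    (hk_nonneg : ∀ s ∈ Set.Ioo (0:ℝ) T, 0 ≤ ktil s)
    (hk_antitone : AntitoneOn ktil (Set.Ioo 0 T))
    (v : ℝ → H) (hv : MemLp v 2 (volume.restrict (Set.Ioo 0 T))) :
    ∀ᵐ t ∂(volume.restrict (Set.Ioo (0:ℝ) T)),
      ∃ (D : H) (d : ℝ),
        HasDerivAt (fun τ : ℝ => ∫ s in (0:ℝ)..τ, ktil (τ - s) • v s) D t ∧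
        HasDerivAt (fun τ : ℝ => ∫ s in (0:ℝ)..τ, ktil (τ - s) * ‖v s‖ ^ 2) d t ∧
        ⟪D, v t⟫ =
          (1 / 2) * d + (1 / 2) * ktil t * ‖v t‖ ^ 2 +
            (1 / 2) * ∫ s in (0:ℝ)..t, (-(ktil' s)) * ‖v t - v (t - s)‖ ^ 2 :=
  kernel_convolution_identity_general T ktil ktil' hderiv hk'_int v hv
end
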